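/- arXiv:1607.03836 — 7 statements merged into one kernel-verified Lean document; each statement's English description precedes it below -/
import Mathlib

section
/- Let α = (α₁, ..., αₙ) be a nonincreasing sequence of positive integers with even sum. If n ≥ (α₁ + αₙ + 1)² / (4·αₙ), then α is graphic. -/
/-!
A sequence with even sum is graphic as soon as it satisfies the Erdős–Gallai inequalities
`∑_{i ∈ S} d_i ≤ k(k-1) + ∑_{i ∉ S} min(k, d_i)` for all `k`-sets `S`. This is proved by
induction on the degree sum, as in the Havel–Hakimi algorithm: joining a vertex `v₀` of maximum
degree `s` to `s` other vertices of largest degree leaves a residual sequence that still satisfies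
the inequalities, and it is enough to check them on sets `S` all of whose degrees are at least `#S`.

Here every degree lies in `[b, a]` with `a = α₁` and `b = αₙ`, so it suffices that
`k a ≤ k(k-1) + (n-k) min(k, b)`. For `k > b` this holds because
`4 (k² - (a+b+1) k + b n) ≥ (2k - a - b - 1)² ≥ 0`; for `k ≤ b` it amounts to `a < n`, which
follows from `4 b n ≥ (a+b+1)² ≥ 4 b (a+1)`.
-/

def IsGraphic {n : ℕ} (d : Fin n → ℕ) : Prop :=
  ∃ (G : SimpleGraph (Fin n)) (_ : DecidableRel G.Adj), ∀ i, G.degree i = d i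

open Finset

variable {V : Type*} [DecidableEq V]

lemma exists_top_subset (d : V → ℕ) {U : Finset V} {m : ℕ} (hm : m ≤ #U) :
    ∃ T ⊆ U, #T = m ∧ ∀ x ∈ T, ∀ y ∈ U, y ∉ T → d y ≤ d x := by
  obtain ⟨T, hT, hmax⟩ := exists_max_image (U.powersetCard m) (fun T => ∑ x ∈ T, d x)
    (powersetCard_nonempty.mpr hm)
  rw [mem_powersetCard] at hT
  refine ⟨T, hT.1, hT.2, fun x hx y hy hyT => ?_⟩
  by_contra! hlt
  have hyT' : y ∉ T.erase x := fun h => hyT (mem_of_mem_erase h)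
  have hswap := hmax (insert y (T.erase x)) (mem_powersetCard.mpr
    ⟨insert_subset hy ((erase_subset x T).trans hT.1), by
      rw [card_insert_of_notMem hyT', card_erase_of_mem hx, hT.2]
      have := card_pos.mpr ⟨x, hx⟩
      omega⟩)
  rw [sum_insert hyT', ← add_sum_erase T d hx] at hswap
  omega

lemma sum_le_card_inter_mul_add_card_sdiff_mul (f : V → ℕ) (S T : Finset V) {p q : ℕ}
    (hp : ∀ x ∈ S ∩ T, f x ≤ p) (hq : ∀ x ∈ S \ T, f x ≤ q) :
    ∑ x ∈ S, f x ≤ #(S ∩ T) * p + #(S \ T) * q := by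
  rw [← sum_inter_add_sum_sdiff S T]
  exact add_le_add (by simpa using sum_le_card_nsmul _ f p hp)
    (by simpa using sum_le_card_nsmul _ f q hq)

lemma succ_mul_self_eq_mul_pred_add (k : ℕ) : (k + 1) * k = k * (k - 1) + 2 * k := by
  obtain _ | k := k
  · rfl
  · rw [Nat.add_sub_cancel]; ring

/-- The degrees left over once `v₀` is joined to every vertex of `T` ("laying off" `v₀`). -/
def layoff (d : V → ℕ) (v₀ : V) (T : Finset V) (x : V) : ℕ :=
  if x = v₀ then 0 else d x - if x ∈ T then 1 else 0

structure IsLayoff (d : V → ℕ) (v₀ : V) (T : Finset V) : Prop where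
  le_apply_self : ∀ x, d x ≤ d v₀
  notMem : v₀ ∉ T
  card_eq : #T = d v₀
  pos : ∀ x ∈ T, 0 < d x
  le_of_notMem : ∀ x ∈ T, ∀ y ∉ T, y ≠ v₀ → d y ≤ d x

variable {d : V → ℕ} {v₀ : V} {T : Finset V}

@[simp] lemma layoff_self : layoff d v₀ T v₀ = 0 := if_pos rfl

lemma layoff_of_notMem {x : V} (hx : x ≠ v₀) (hxT : x ∉ T) : layoff d v₀ T x = d x := by
  simp [layoff, hx, hxT]

lemma IsLayoff.layoff_add (h : IsLayoff d v₀ T) {x : V} (hx : x ≠ v₀) :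
    layoff d v₀ T x + (if x ∈ T then 1 else 0) = d x := by
  by_cases hxT : x ∈ T
  · have := h.pos x hxT
    simp only [layoff, hx, hxT, if_true, if_false]
    omega
  · simp [layoff_of_notMem hx hxT, hxT]

lemma IsLayoff.layoff_add_one (h : IsLayoff d v₀ T) {x : V} (hx : x ∈ T) :
    layoff d v₀ T x + 1 = d x := by
  simpa [hx] using h.layoff_add (ne_of_mem_of_not_mem hx h.notMem)

lemma IsLayoff.sum_layoff_add_card_inter (h : IsLayoff d v₀ T) {S : Finset V} (hv₀S : v₀ ∉ S) :
    ∑ x ∈ S, layoff d v₀ T x + #(S ∩ T) = ∑ x ∈ S, d x := by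
  rw [← filter_mem_eq_inter, card_filter, ← sum_add_distrib]
  exact sum_congr rfl fun x hx => h.layoff_add (ne_of_mem_of_not_mem hx hv₀S)

variable [Fintype V]

lemma IsLayoff.sum_layoff_add (h : IsLayoff d v₀ T) :
    ∑ x, layoff d v₀ T x + 2 * d v₀ = ∑ x, d x := by
  have hT : univ.erase v₀ ∩ T = T :=
    inter_eq_right.mpr fun x hx => mem_erase.mpr ⟨ne_of_mem_of_not_mem hx h.notMem, mem_univ x⟩
  have := h.sum_layoff_add_card_inter (notMem_erase v₀ univ)
  rw [hT, h.card_eq] at this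
  rw [← add_sum_erase univ _ (mem_univ v₀), ← add_sum_erase univ d (mem_univ v₀), layoff_self]
  omega

lemma IsLayoff.even_sum_layoff (h : IsLayoff d v₀ T) (heven : Even (∑ x, d x)) :
    Even (∑ x, layoff d v₀ T x) := by
  rw [← h.sum_layoff_add] at heven
  exact (Nat.even_add.mp heven).mpr (even_two_mul _)

lemma IsLayoff.exists_degree_eq (h : IsLayoff d v₀ T)
    (G : SimpleGraph V) [DecidableRel G.Adj] (hG : ∀ x, G.degree x = layoff d v₀ T x) :
    ∃ (H : SimpleGraph V) (_ : DecidableRel H.Adj), ∀ x, H.degree x = d x := by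
  classical
  have hiso : ∀ y, ¬ G.Adj v₀ y := fun y hy => by
    have := (G.degree_pos_iff_exists_adj v₀).mpr ⟨y, hy⟩
    simp [hG] at this
  set H := G ⊔ SimpleGraph.fromRel (fun x y => x = v₀ ∧ y ∈ T)
  have hnbr : ∀ x, H.neighborFinset x =
      if x = v₀ then T else if x ∈ T then insert v₀ (G.neighborFinset x)
      else G.neighborFinset x := by
    intro x
    have := h.notMem
    ext y
    have := hiso y
    have := fun h' : G.Adj x v₀ => hiso x h'.symm
    split_ifs <;> simp only [H, SimpleGraph.mem_neighborFinset, SimpleGraph.sup_adj,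
      SimpleGraph.fromRel_adj, mem_insert] <;> grind
  refine ⟨H, inferInstance, fun x => ?_⟩
  have hGx := hG x
  rw [← SimpleGraph.card_neighborFinset_eq_degree, hnbr]
  rw [layoff, ← SimpleGraph.card_neighborFinset_eq_degree] at hGx
  split_ifs at hGx ⊢ with hx hxT
  · exact h.card_eq.trans (by rw [hx])
  · rw [card_insert_of_notMem (fun h' => hiso x ((G.mem_neighborFinset x v₀).mp h').symm)]
    have := h.pos x hxT
    omega
  · simpa using hGx

/-- The Erdős–Gallai inequalities, imposed on every vertex set `S` rather than on the `k` largest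
degrees, so that no ordering of the vertices is needed. -/
def ErdosGallai (d : V → ℕ) : Prop :=
  ∀ S : Finset V, ∑ x ∈ S, d x ≤ #S * (#S - 1) + ∑ x ∈ Sᶜ, min #S (d x)

/-- If `x ∈ S` has degree `< #S`, the inequality for `S` follows from the one for `S.erase x`. -/
lemma ErdosGallai.of_forall_card_le
    (h : ∀ S : Finset V, (∀ x ∈ S, #S ≤ d x) →
      ∑ x ∈ S, d x ≤ #S * (#S - 1) + ∑ x ∈ Sᶜ, min #S (d x)) :
    ErdosGallai d := by
  intro S
  induction S using Finset.strongInduction with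
  | H S ih =>
  by_cases hS : ∀ x ∈ S, #S ≤ d x
  · exact h S hS
  push Not at hS
  obtain ⟨x, hx, hdx⟩ := hS
  have hih := ih (S.erase x) (erase_ssubset hx)
  rw [card_erase_of_mem hx, compl_erase, sum_insert (by simp [hx])] at hih
  have hmin : ∑ y ∈ Sᶜ, min (#S - 1) (d y) ≤ ∑ y ∈ Sᶜ, min #S (d y) :=
    sum_le_sum fun _ _ => by omega
  obtain ⟨m, hm⟩ : ∃ m, #S = m + 1 := ⟨#S - 1, by have := card_pos.mpr ⟨x, hx⟩; omega⟩
  have hsq := succ_mul_self_eq_mul_pred_add m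
  rw [← add_sum_erase S d hx]
  rw [hm] at hih hmin hdx ⊢
  simp only [Nat.add_sub_cancel] at hih hmin hdx ⊢
  omega

lemma ErdosGallai.exists_isLayoff (hEG : ErdosGallai d) (hv₀ : ∀ x, d x ≤ d v₀) :
    ∃ T, IsLayoff d v₀ T := by
  set U := ({v₀}ᶜ : Finset V).filter (0 < d ·)
  have hU : d v₀ ≤ #U := by
    have hsingle := hEG {v₀}
    rw [card_singleton, sum_singleton, Nat.sub_self, mul_zero, zero_add] at hsingle
    refine hsingle.trans ?_
    rw [card_filter]
    exact sum_le_sum fun x _ => by split_ifs <;> omega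
  obtain ⟨T, hTU, hT, htop⟩ := exists_top_subset d hU
  have hTU' : ∀ x ∈ T, x ≠ v₀ ∧ 0 < d x := fun x hx => by simpa [U] using hTU hx
  refine ⟨T, hv₀, fun hv₀T => (hTU' v₀ hv₀T).1 rfl, hT, fun x hx => (hTU' x hx).2,
    fun x hx y hyT hyv₀ => ?_⟩
  by_cases hy : 0 < d y
  · exact htop x hx y (by simp [U, hyv₀, hy]) hyT
  · omega

lemma one_le_sum_compl_min_one_of_even {f : V → ℕ} {y : V} (hy : f y = 1)
    (heven : Even (∑ x, f x)) : 1 ≤ ∑ x ∈ {y}ᶜ, min 1 (f x) := by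
  by_contra! h
  have hzero : ∑ x ∈ {y}ᶜ, f x = 0 :=
    sum_eq_zero fun x hx => by have := sum_eq_zero_iff.mp (Nat.lt_one_iff.mp h) x hx; omega
  rw [← add_sum_erase univ f (mem_univ y), ← compl_singleton, hzero, hy] at heven
  exact Nat.not_even_one heven

lemma IsLayoff.sum_layoff_le_of_forall_lt (h : IsLayoff d v₀ T) {S : Finset V} (hv₀S : v₀ ∉ S)
    (hT : ∀ x ∈ T, #S < d x) :
    ∑ x ∈ S, layoff d v₀ T x ≤ #S * (#S - 1) + ∑ x ∈ Sᶜ, min #S (layoff d v₀ T x) := by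
  have hLHS : ∑ x ∈ S, layoff d v₀ T x + #(S ∩ T) ≤ #S * d v₀ := by
    rw [h.sum_layoff_add_card_inter hv₀S]
    simpa using sum_le_card_nsmul S d _ fun x _ => h.le_apply_self x
  have hRHS : #(T \ S) * #S ≤ ∑ x ∈ Sᶜ, min #S (layoff d v₀ T x) :=
    calc #(T \ S) * #S ≤ ∑ x ∈ T \ S, min #S (layoff d v₀ T x) := by
          simpa using card_nsmul_le_sum (T \ S) _ #S fun x hx => by
            have := h.layoff_add_one (mem_sdiff.mp hx).1
            have := hT x (mem_sdiff.mp hx).1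
            omega
      _ ≤ ∑ x ∈ Sᶜ, min #S (layoff d v₀ T x) :=
          sum_le_sum_of_subset fun x hx => mem_compl.mpr (mem_sdiff.mp hx).2
  have hcard := card_inter_add_card_sdiff T S
  rw [inter_comm, h.card_eq] at hcard
  have hST : #(S ∩ T) ≤ #S := card_le_card inter_subset_left
  rw [← hcard] at hLHS
  generalize #(S ∩ T) = a, #(T \ S) = t, #S = k at *
  obtain _ | k := k
  · omega
  · simp only [Nat.add_sub_cancel]
    nlinarith

lemma IsLayoff.sum_layoff_le_of_subset (h : IsLayoff d v₀ T) {S : Finset V} (hv₀S : v₀ ∉ S)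
    (hEG : ErdosGallai d) (hST : S ⊆ T) {x₀ : V} (hx₀ : x₀ ∈ T) (hdx₀ : d x₀ ≤ #S) :
    ∑ x ∈ S, layoff d v₀ T x ≤ #S * (#S - 1) + ∑ x ∈ Sᶜ, min #S (layoff d v₀ T x) := by
  have hEG := hEG (insert v₀ S)
  rw [card_insert_of_notMem hv₀S, sum_insert hv₀S, compl_insert, Nat.add_sub_cancel] at hEG
  have hpt : ∀ x ∈ Sᶜ.erase v₀,
      min (#S + 1) (d x) ≤ min #S (layoff d v₀ T x) + if x ∈ T then 1 else 0 := by
    intro x hx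
    have hxv₀ := ne_of_mem_erase hx
    by_cases hxT : x ∈ T
    · have := h.layoff_add_one hxT
      rw [if_pos hxT]
      omega
    · have := h.le_of_notMem x₀ hx₀ x hxT hxv₀
      rw [if_neg hxT, layoff_of_notMem hxv₀ hxT]
      omega
  have hfilter : {x ∈ Sᶜ.erase v₀ | x ∈ T} = T \ S := by
    ext x
    simp only [mem_filter, mem_erase, mem_compl, mem_sdiff]
    exact ⟨fun hx => ⟨hx.2, hx.1.2⟩,
      fun hx => ⟨⟨ne_of_mem_of_not_mem hx.1 h.notMem, hx.2⟩, hx.1⟩⟩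
  have hsum := sum_le_sum hpt
  rw [sum_add_distrib, sum_boole, Nat.cast_id, hfilter, card_sdiff_of_subset hST, h.card_eq]
    at hsum
  have hLHS := h.sum_layoff_add_card_inter hv₀S
  rw [inter_eq_left.mpr hST] at hLHS
  rw [← add_sum_erase _ _ (mem_compl.mpr hv₀S), layoff_self, _root_.min_zero, zero_add]
  have hk := succ_mul_self_eq_mul_pred_add #S
  have := card_le_card hST
  rw [h.card_eq] at this
  omega

lemma IsLayoff.sum_layoff_le_of_not_subset (h : IsLayoff d v₀ T) {S : Finset V}
    (hv₀S : v₀ ∉ S) (hS : ∀ x ∈ S, #S ≤ layoff d v₀ T x) (hk : 2 ≤ #S)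
    {x₀ : V} (hx₀ : x₀ ∈ T) (hdx₀ : d x₀ ≤ #S) {y : V} (hy : y ∈ S) (hyT : y ∉ T) :
    ∑ x ∈ S, layoff d v₀ T x ≤ #S * (#S - 1) + ∑ x ∈ Sᶜ, min #S (layoff d v₀ T x) := by
  have hyv₀ : y ≠ v₀ := ne_of_mem_of_not_mem hy hv₀S
  have hdy : d y = #S := by
    have := hS y hy
    have := h.le_of_notMem x₀ hx₀ y hyT hyv₀
    rw [layoff_of_notMem hyv₀ hyT] at *
    omega
  have hLHS : ∑ x ∈ S, layoff d v₀ T x + #(S ∩ T) ≤ #(S ∩ T) * d v₀ + #(S \ T) * #S := by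
    rw [h.sum_layoff_add_card_inter hv₀S]
    refine sum_le_card_inter_mul_add_card_sdiff_mul _ _ _ (fun x _ => h.le_apply_self x)
      fun x hx => ?_
    rw [mem_sdiff] at hx
    exact (h.le_of_notMem x₀ hx₀ x hx.2 (ne_of_mem_of_not_mem hx.1 hv₀S)).trans hdx₀
  have hRHS : #(T \ S) * (#S - 1) ≤ ∑ x ∈ Sᶜ, min #S (layoff d v₀ T x) :=
    calc #(T \ S) * (#S - 1) ≤ ∑ x ∈ T \ S, min #S (layoff d v₀ T x) := by
          simpa using card_nsmul_le_sum (T \ S) _ (#S - 1) fun x hx => by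
            have := h.layoff_add_one (mem_sdiff.mp hx).1
            have := h.le_of_notMem x (mem_sdiff.mp hx).1 y hyT hyv₀
            omega
      _ ≤ ∑ x ∈ Sᶜ, min #S (layoff d v₀ T x) :=
          sum_le_sum_of_subset fun x hx => mem_compl.mpr (mem_sdiff.mp hx).2
  have hcardT := card_inter_add_card_sdiff T S
  have hcardS := card_inter_add_card_sdiff S T
  have hb : 1 ≤ #(S \ T) := card_pos.mpr ⟨y, mem_sdiff.mpr ⟨hy, hyT⟩⟩
  have hsk : #S ≤ d v₀ := hdy ▸ h.le_apply_self y
  rw [inter_comm, h.card_eq] at hcardT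
  generalize #(S ∩ T) = a, #(S \ T) = b, #(T \ S) = t, #S = k, d v₀ = s at *
  obtain ⟨k, rfl⟩ : ∃ k', k = k' + 1 := ⟨k - 1, by omega⟩
  simp only [Nat.add_sub_cancel] at *
  rcases Nat.eq_zero_or_pos a with rfl | ha <;> nlinarith

lemma IsLayoff.erdosGallai_layoff (h : IsLayoff d v₀ T) (hEG : ErdosGallai d)
    (heven : Even (∑ x, d x)) : ErdosGallai (layoff d v₀ T) := by
  refine ErdosGallai.of_forall_card_le fun S hS => ?_
  rcases S.eq_empty_or_nonempty with rfl | ⟨z, hz⟩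
  · simp
  have hv₀S : v₀ ∉ S := fun hv₀ => by
    have := hS v₀ hv₀
    rw [layoff_self] at this
    exact (card_pos.mpr ⟨z, hz⟩).ne' (Nat.le_zero.mp this)
  by_cases hlt : ∀ x ∈ T, #S < d x
  · exact h.sum_layoff_le_of_forall_lt hv₀S hlt
  push Not at hlt
  obtain ⟨x₀, hx₀, hdx₀⟩ := hlt
  by_cases hST : S ⊆ T
  · exact h.sum_layoff_le_of_subset hv₀S hEG hST hx₀ hdx₀
  obtain ⟨y, hy, hyT⟩ := not_subset.mp hST
  by_cases hk : 2 ≤ #S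
  · exact h.sum_layoff_le_of_not_subset hv₀S hS hk hx₀ hdx₀ hy hyT
  -- Only this case needs the parity: `(1, 1, 1)` satisfies the inequalities, its layoff
  -- `(0, 1)` does not.
  obtain rfl : S = {y} :=
    eq_singleton_iff_unique_mem.mpr ⟨hy, fun x hx => card_le_one.mp (by omega) x hx y hy⟩
  have hdy : layoff d v₀ T y ≤ 1 := by
    rw [layoff_of_notMem (ne_of_mem_of_not_mem hy hv₀S) hyT]
    exact (h.le_of_notMem x₀ hx₀ y hyT (ne_of_mem_of_not_mem hy hv₀S)).trans hdx₀
  rw [card_singleton, sum_singleton, Nat.sub_self, mul_zero, zero_add]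
  rcases Nat.le_one_iff_eq_zero_or_eq_one.mp hdy with h0 | h1
  · exact h0 ▸ Nat.zero_le _
  · exact h1 ▸ one_le_sum_compl_min_one_of_even h1 (h.even_sum_layoff heven)

theorem ErdosGallai.exists_degree_eq (hEG : ErdosGallai d) (heven : Even (∑ x, d x)) :
    ∃ (G : SimpleGraph V) (_ : DecidableRel G.Adj), ∀ x, G.degree x = d x := by
  induction hN : ∑ x, d x using Nat.strong_induction_on generalizing d with
  | _ N ih =>
  by_cases hzero : ∀ x, d x = 0
  · exact ⟨⊥, inferInstance, fun x => by simp [hzero]⟩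
  push Not at hzero
  obtain ⟨z, hz⟩ := hzero
  obtain ⟨v₀, -, hv₀⟩ := exists_max_image univ d ⟨z, mem_univ z⟩
  obtain ⟨T, hT⟩ := hEG.exists_isLayoff fun x => hv₀ x (mem_univ x)
  have hlt : ∑ x, layoff d v₀ T x < N := by
    have := hT.sum_layoff_add
    have := hv₀ z (mem_univ z)
    omega
  obtain ⟨G, _, hG⟩ := ih _ hlt (hT.erdosGallai_layoff hEG heven) (hT.even_sum_layoff heven) rfl
  exact hT.exists_degree_eq G hG

lemma mul_le_mul_sub_one_add_mul_min {k n a b : ℕ} (hk : k ≤ n)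
    (h : (a + b + 1) ^ 2 ≤ 4 * b * n) : k * a ≤ k * (k - 1) + (n - k) * min k b := by
  obtain _ | k := k
  · simp
  simp only [Nat.add_sub_cancel]
  obtain ⟨m, rfl⟩ : ∃ m, n = k + 1 + m := ⟨n - (k + 1), by omega⟩
  rw [Nat.add_sub_cancel_left]
  rcases le_total (k + 1) b with hkb | hbk
  · rw [min_eq_left hkb]
    have hab : a + 1 ≤ k + 1 + m := by
      have hb : 0 < b := by omega
      nlinarith [sq_nonneg ((a : ℤ) + 1 - b)]
    nlinarith
  · rw [min_eq_right hbk]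
    nlinarith [sq_nonneg ((a : ℤ) + b + 1 - 2 * (k + 1))]

lemma ErdosGallai.of_le_of_le {a b : ℕ} (ha : ∀ x, d x ≤ a) (hb : ∀ x, b ≤ d x)
    (h : (a + b + 1) ^ 2 ≤ 4 * b * Fintype.card V) : ErdosGallai d := by
  intro S
  have hL : ∑ x ∈ S, d x ≤ #S * a := by simpa using sum_le_card_nsmul S d a fun x _ => ha x
  have hR : (Fintype.card V - #S) * min #S b ≤ ∑ x ∈ Sᶜ, min #S (d x) := by
    simpa [card_compl] using card_nsmul_le_sum Sᶜ _ _ fun x _ => min_le_min_left #S (hb x)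
  have := mul_le_mul_sub_one_add_mul_min (card_le_univ S) h
  omega

/-- Zverovich–Zverovich: a nonincreasing sequence of positive integers with even
sum and `n ≥ (α₁+αₙ+1)²/(4αₙ)` is graphic. -/
theorem stmt_1 {n : ℕ} (hn : 0 < n) (α : Fin n → ℕ) (hα : Antitone α)
    (hpos : ∀ i, 0 < α i) (heven : Even (∑ i, α i))
    (hineq : (n : ℚ) ≥
      ((α ⟨0, hn⟩ : ℚ) + (α ⟨n - 1, by omega⟩ : ℚ) + 1) ^ 2 /
        (4 * (α ⟨n - 1, by omega⟩ : ℚ))) :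
    IsGraphic α := by
  set a := α ⟨0, hn⟩
  set b := α ⟨n - 1, by omega⟩
  have hb : (0 : ℚ) < 4 * b := by have := hpos ⟨n - 1, by omega⟩; positivity
  rw [ge_iff_le, div_le_iff₀ hb] at hineq
  have hsq : (a + b + 1) ^ 2 ≤ 4 * b * Fintype.card (Fin n) := by
    rw [Fintype.card_fin]
    exact_mod_cast (by linarith : ((a : ℚ) + b + 1) ^ 2 ≤ 4 * b * n)
  have hEG : ErdosGallai α := ErdosGallai.of_le_of_le
    (fun i => hα (Fin.le_iff_val_le_val.mpr (Nat.zero_le _)))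
    (fun i => hα (Fin.le_iff_val_le_val.mpr (by simp only; omega))) hsq
  exact hEG.exists_degree_eq heven
end

section
/- If a degree sequence α is graphic and α majorizes a sequence β (of the same length and sum), then β is graphic. -/
/-!
Induct on the excess `∑ k, (α k - β k)`. If `α ≠ β`, let `j` be the first index with
`α j < β j` and `i` the last index before `j` with `β i < α i`. Moving one unit from `α i` to
`α j` keeps `α` nonincreasing (strictly between `i` and `j` the sequences agree), keeps it
majorizing `β` (on `[i, j)` the prefix sums of `α` exceed those of `β` strictly), and lowers the
excess. Such a transfer is realized by an edge switch: as `deg j < deg i`, some neighbour `k` of `i`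
other than `j` is not adjacent to `j`, and replacing the edge `ik` by `jk` moves one unit of
degree from `i` to `j`.
-/

open Finset

namespace SimpleGraph
variable {V : Type*} {G : SimpleGraph V}

lemma deleteEdges_sup_edge {u v : V} (h : G.Adj u v) : G.deleteEdges {s(u, v)} ⊔ edge u v = G := by
  ext a b
  simp only [sup_adj, deleteEdges_adj, Set.mem_singleton_iff, edge_adj]
  constructor
  · rintro (⟨hab, -⟩ | ⟨(⟨rfl, rfl⟩ | ⟨rfl, rfl⟩), -⟩)
    exacts [hab, h, h.symm]
  · intro hab
    by_cases he : s(a, b) = s(u, v)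
    · exact Or.inr ⟨Sym2.eq_iff.1 he, hab.ne⟩
    · exact Or.inl ⟨hab, he⟩

variable [Fintype V] [DecidableEq V]

lemma degree_edge {u v : V} (huv : u ≠ v) (x : V) :
    (edge u v).degree x = (Pi.single u 1 : V → ℕ) x + (Pi.single v 1 : V → ℕ) x := by
  rw [← card_neighborFinset_eq_degree]
  rcases eq_or_ne x u with rfl | hxu
  · have : (edge x v).neighborFinset x = {v} := by
      ext w; simp only [mem_neighborFinset, edge_adj, mem_singleton]; grind
    simp [this, huv.symm]
  rcases eq_or_ne x v with rfl | hxv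
  · have : (edge u x).neighborFinset x = {u} := by
      ext w; simp only [mem_neighborFinset, edge_adj, mem_singleton]; grind
    simp [this, hxu]
  · have : (edge u v).neighborFinset x = ∅ := by
      ext w; simp [edge_adj, hxu, hxv]
    simp [this, hxu, hxv]

variable [DecidableRel G.Adj]

lemma degree_sup_edge {u v : V} (huv : u ≠ v) (hn : ¬G.Adj u v) (x : V) :
    (G ⊔ edge u v).degree x =
      G.degree x + (Pi.single u 1 : V → ℕ) x + (Pi.single v 1 : V → ℕ) x := by
  rw [add_assoc, ← degree_edge huv]
  simp only [← card_neighborFinset_eq_degree]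
  rw [neighborFinset_sup, card_union_of_disjoint]
  exact disjoint_neighborFinset_of_disjoint _ _ _ ((G.disjoint_edge).2 hn)

lemma exists_adj_not_adj_of_degree_lt {i j : V} (h : G.degree j < G.degree i) :
    ∃ k, G.Adj i k ∧ ¬G.Adj j k ∧ k ≠ j := by
  have hcard : #((G.neighborFinset j).erase i) < #((G.neighborFinset i).erase j) := by
    simp only [card_erase_eq_ite, mem_neighborFinset, card_neighborFinset_eq_degree, G.adj_comm j i]
    split_ifs with hij
    · have : 0 < G.degree j := (G.degree_pos_iff_exists_adj j).2 ⟨i, hij.symm⟩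
      omega
    · exact h
  obtain ⟨k, hki, hkj⟩ := exists_mem_notMem_of_card_lt_card hcard
  simp only [mem_erase, mem_neighborFinset, not_and] at hki hkj
  exact ⟨k, hki.2, fun hjk => hkj (G.ne_of_adj hki.2).symm hjk, hki.1⟩

lemma exists_degree_add_single_eq {i j : V} (h : G.degree j < G.degree i) :
    ∃ (G' : SimpleGraph V) (_ : DecidableRel G'.Adj),
      ∀ x, G'.degree x + (Pi.single i 1 : V → ℕ) x = G.degree x + (Pi.single j 1 : V → ℕ) x := by
  obtain ⟨k, hik, hjk, hkj⟩ := exists_adj_not_adj_of_degree_lt h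
  have hD (x : V) : G.degree x = (G.deleteEdges {s(i, k)}).degree x +
      (Pi.single i 1 : V → ℕ) x + (Pi.single k 1 : V → ℕ) x := by
    convert degree_sup_edge (G := G.deleteEdges {s(i, k)}) hik.ne
      (fun h => (deleteEdges_adj.1 h).2 rfl) x using 2
    exact (deleteEdges_sup_edge hik).symm
  refine ⟨G.deleteEdges {s(i, k)} ⊔ edge j k, inferInstance, fun x => ?_⟩
  rw [degree_sup_edge hkj.symm (fun h => hjk (deleteEdges_le _ h)) x, hD x]
  omega

end SimpleGraph

structure Majorizes {ι : Type*} [LinearOrder ι] [Fintype ι] [LocallyFiniteOrderBot ι]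
    (α β : ι → ℕ) : Prop where
  antitone_left : Antitone α
  antitone_right : Antitone β
  sum_eq : ∑ i, α i = ∑ i, β i
  sum_Iic_le : ∀ k, ∑ i ∈ Iic k, β i ≤ ∑ i ∈ Iic k, α i

variable {ι : Type*} [LinearOrder ι] {α α' β : ι → ℕ} {i j : ι}

lemma add_ite_eq_of_add_single_eq (h : α' + Pi.single i 1 = α + Pi.single j 1) (k : ι) :
    α' k + (if k = i then 1 else 0) = α k + (if k = j then 1 else 0) := by
  simpa [Pi.single_apply] using congrFun h k

lemma sum_add_ite_eq_of_add_single_eq (h : α' + Pi.single i 1 = α + Pi.single j 1)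
    (s : Finset ι) :
    ∑ k ∈ s, α' k + (if i ∈ s then 1 else 0) = ∑ k ∈ s, α k + (if j ∈ s then 1 else 0) := by
  simpa [sum_add_distrib, sum_pi_single'] using congrArg (∑ k ∈ s, · k) h

lemma antitone_of_add_single_eq (hα : Antitone α) (hβ : Antitone β) (hij : i < j)
    (hi : β i < α i) (hj : α j < β j) (hbetween : ∀ k, i < k → k < j → α k = β k)
    (h : α' + Pi.single i 1 = α + Pi.single j 1) : Antitone α' := by
  have hgap : α j + 2 ≤ α i := by have := hβ hij.le; omega
  have lt_at_i (b : ι) (hib : i < b) (hbj : b ≠ j) : α b < α i := by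
    rcases lt_or_gt_of_ne hbj with hbj | hbj
    · have := hβ hib.le; have := hbetween b hib hbj; omega
    · have := hα hbj.le; have := hβ hij.le; omega
  have gt_at_j (a : ι) (haj : a < j) (hai : a ≠ i) : α j < α a := by
    rcases lt_or_gt_of_ne hai with hai | hai
    · have := hα hai.le; have := hβ hij.le; omega
    · have := hβ haj.le; have := hbetween a hai haj; omega
  intro a b hab
  rcases hab.lt_or_eq with hab | rfl
  swap; · exact le_rfl
  have ha := add_ite_eq_of_add_single_eq h a
  have hb := add_ite_eq_of_add_single_eq h b
  have hαab := hα hab.le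
  obtain rfl | hai := eq_or_ne a i
  · obtain rfl | hbj := eq_or_ne b j
    · simp only [if_pos, hij.ne, hij.ne', if_false] at ha hb
      omega
    · have := lt_at_i b hab hbj
      simp only [if_pos, hab.ne', hij.ne, hbj, if_false] at ha hb
      omega
  obtain rfl | haj := eq_or_ne a j
  · simp only [if_pos, hij.ne', hab.ne', (hij.trans hab).ne', if_false] at ha hb
    omega
  obtain rfl | hbj := eq_or_ne b j
  · have := gt_at_j a hab hai
    simp only [if_pos, hai, haj, hij.ne', if_false] at ha hb
    omega
  simp only [hai, haj, hbj, if_false] at ha hb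
  split_ifs at hb <;> omega

variable [Fintype ι]

lemma sum_tsub_lt_of_add_single_eq (hi : β i < α i) (hj : α j < β j)
    (h : α' + Pi.single i 1 = α + Pi.single j 1) :
    ∑ k, (α' k - β k) < ∑ k, (α k - β k) := by
  have hij : i ≠ j := by rintro rfl; omega
  refine sum_lt_sum (fun k _ => ?_) ⟨i, mem_univ i, ?_⟩
  · have := add_ite_eq_of_add_single_eq h k
    obtain rfl | hki := eq_or_ne k i
    · simp only [if_pos, hij, if_false] at this; omega
    obtain rfl | hkj := eq_or_ne k j
    · simp only [if_pos, hki, if_false] at this; omega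
    · simp only [hki, hkj, if_false] at this; omega
  · have := add_ite_eq_of_add_single_eq h i
    simp only [if_pos, hij, if_false] at this
    omega

variable [LocallyFiniteOrderBot ι]

lemma Majorizes.of_add_single_eq (hmaj : Majorizes α β) (hij : i < j) (hi : β i < α i)
    (hj : α j < β j) (hle : ∀ k < j, β k ≤ α k) (hbetween : ∀ k, i < k → k < j → α k = β k)
    (h : α' + Pi.single i 1 = α + Pi.single j 1) : Majorizes α' β where
  antitone_left :=
    antitone_of_add_single_eq hmaj.antitone_left hmaj.antitone_right hij hi hj hbetween h
  antitone_right := hmaj.antitone_right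
  sum_eq := by
    have := sum_add_ite_eq_of_add_single_eq h univ
    simp only [mem_univ, if_true] at this
    rw [← hmaj.sum_eq]
    omega
  sum_Iic_le k := by
    have hk := sum_add_ite_eq_of_add_single_eq h (Iic k)
    have := hmaj.sum_Iic_le k
    simp only [mem_Iic] at hk
    by_cases hjk : j ≤ k
    · rw [if_pos hjk, if_pos (hij.le.trans hjk)] at hk
      omega
    by_cases hik : i ≤ k
    · have hlt : ∑ x ∈ Iic k, β x < ∑ x ∈ Iic k, α x :=
        sum_lt_sum (fun x hx => hle x ((mem_Iic.1 hx).trans_lt (not_le.1 hjk)))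
          ⟨i, mem_Iic.2 hik, hi⟩
      rw [if_pos hik, if_neg hjk] at hk
      omega
    · rw [if_neg hik, if_neg hjk] at hk
      omega

lemma Majorizes.exists_transfer (hmaj : Majorizes α β) (hne : α ≠ β) :
    ∃ i j α', α j < α i ∧ α' + Pi.single i 1 = α + Pi.single j 1 ∧ Majorizes α' β ∧
      ∑ k, (α' k - β k) < ∑ k, (α k - β k) := by
  have hex_j : ∃ k, α k < β k := by
    by_contra! hge
    exact hne (funext fun k => ((sum_eq_sum_iff_of_le fun k _ => hge k).1
      hmaj.sum_eq.symm k (mem_univ k)).symm)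
  obtain ⟨j, hj⟩ := exists_minimal_of_wellFoundedLT _ hex_j
  have hle : ∀ k < j, β k ≤ α k := fun k hk => not_lt.1 (hj.not_prop_of_lt hk)
  have hex_i : ∃ k, k < j ∧ β k < α k := by
    by_contra! hge
    have : ∑ k ∈ Iic j, α k < ∑ k ∈ Iic j, β k :=
      sum_lt_sum (fun k hk => (mem_Iic.1 hk).lt_or_eq.elim (hge k) (fun h => h ▸ hj.prop.le))
        ⟨j, mem_Iic.2 le_rfl, hj.prop⟩
    exact (hmaj.sum_Iic_le j).not_gt this
  obtain ⟨i, hi⟩ := exists_maximal_of_wellFoundedGT _ hex_i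
  have hbetween (k : ι) (hik : i < k) (hkj : k < j) : α k = β k :=
    le_antisymm (not_lt.1 fun hlt => hi.not_prop_of_gt hik ⟨hkj, hlt⟩) (hle k hkj)
  obtain ⟨hij, hβαi⟩ := hi.prop
  have hα' : (α + Pi.single j 1 - Pi.single i 1) + Pi.single i 1 = α + Pi.single j 1 := by
    funext k
    simp only [Pi.add_apply, Pi.sub_apply, Pi.single_apply]
    split_ifs with hki <;> subst_vars <;> omega
  refine ⟨i, j, _, ?_, hα', hmaj.of_add_single_eq hij hβαi hj.prop hle hbetween hα',
    sum_tsub_lt_of_add_single_eq hβαi hj.prop hα'⟩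
  have := hmaj.antitone_right hij.le
  have := hj.prop
  omega

lemma IsGraphic.of_add_single_eq {n : ℕ} {d d' : Fin n → ℕ} {i j : Fin n} (hg : IsGraphic d)
    (hij : d j < d i) (h : d' + Pi.single i 1 = d + Pi.single j 1) : IsGraphic d' := by
  obtain ⟨G, _, hG⟩ := hg
  have hdeg : G.degree j < G.degree i := by rwa [hG, hG]
  obtain ⟨G', _, hG'⟩ := G.exists_degree_add_single_eq hdeg
  refine ⟨G', ‹_›, fun x => Nat.add_right_cancel (m := (Pi.single i 1 : Fin n → ℕ) x) ?_⟩
  rw [hG' x, hG x]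
  exact (congrFun h x).symm

theorem IsGraphic.of_majorizes {n : ℕ} {α β : Fin n → ℕ} (hmaj : Majorizes α β)
    (hg : IsGraphic α) : IsGraphic β := by
  obtain rfl | hne := eq_or_ne α β
  · exact hg
  obtain ⟨i, j, α', hij, hα', hmaj', hdec⟩ := hmaj.exists_transfer hne
  exact (hg.of_add_single_eq hij hα').of_majorizes hmaj'
termination_by ∑ k, (α k - β k)
decreasing_by exact hdec

/-- Ruch–Gutman: if a graphic sequence `α` majorizes `β` (same length and sum),
then `β` is graphic. -/
theorem stmt_4 {n : ℕ} (α β : Fin n → ℕ) (hα : Antitone α) (hβ : Antitone β)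
    (hsum : ∑ i, α i = ∑ i, β i)
    (hmaj : ∀ k : Fin n, ∑ i ∈ Finset.Iic k, β i ≤ ∑ i ∈ Finset.Iic k, α i)
    (hg : IsGraphic α) : IsGraphic β :=
  IsGraphic.of_majorizes ⟨hα, hβ, hsum, hmaj⟩ hg
end

section
/- If (α₁ + αₙ + 1)²/4 ≤ n·αₙ (with α₁ ≥ αₙ > 0 and α₁ ≤ n-1), then for every even s with n·αₙ < s < n·α₁, the inequality (α₁ - αₙ)·((n - α₁ - 1)/(n·α₁ - s) + αₙ/(s - n·αₙ)) ≥ 1 holds. Hence the Zverovich–Zverovich condition implies the generalized condition. -/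
/-!
Write `d = a - b` and split the gap `n d = A + B` with `A = n a - s`, `B = s - n b`.
After clearing denominators the claim becomes `B² - d (a + b + 1) B + n b d² ≥ 0`, and completing
the square rewrites the left side as `(B - d (a + b + 1) / 2)² + d² (n b - (a + b + 1)² / 4)`,
which is nonnegative exactly under the Zverovich–Zverovich condition.
-/

section

variable {K : Type*} [Field K] [LinearOrder K] [IsStrictOrderedRing K]

theorem mul_le_sub_mul_add_of_add_eq {a b n A B : K} (hzz : (a + b + 1) ^ 2 / 4 ≤ n * b)
    (hsum : A + B = n * (a - b)) :
    A * B ≤ (a - b) * ((n - a - 1) * B + A * b) := by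
  have hA : A = n * (a - b) - B := by linear_combination hsum
  have hsquare :
      0 ≤ (B - (a - b) * (a + b + 1) / 2) ^ 2 + (a - b) ^ 2 * (n * b - (a + b + 1) ^ 2 / 4) :=
    add_nonneg (sq_nonneg _) (mul_nonneg (sq_nonneg _) (sub_nonneg.mpr hzz))
  subst hA
  linear_combination hsquare

theorem one_le_sub_mul_div_add_div {a b n s : K} (hzz : (a + b + 1) ^ 2 / 4 ≤ n * b)
    (hlow : n * b < s) (hhigh : s < n * a) :
    1 ≤ (a - b) * ((n - a - 1) / (n * a - s) + b / (s - n * b)) := by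
  have hA : 0 < n * a - s := sub_pos.mpr hhigh
  have hB : 0 < s - n * b := sub_pos.mpr hlow
  rw [div_add_div _ _ hA.ne' hB.ne', ← mul_div_assoc, one_le_div (mul_pos hA hB)]
  exact mul_le_sub_mul_add_of_add_eq hzz (by ring)

end

theorem stmt_9_general (a1 an n : ℕ)
    (hzz : ((a1 : ℚ) + an + 1) ^ 2 / 4 ≤ (n : ℚ) * an) :
    ∀ s : ℕ, Even s → n * an < s → s < n * a1 →
      ((a1 : ℚ) - an) *
        (((n : ℚ) - a1 - 1) / ((n : ℚ) * a1 - s) + (an : ℚ) / ((s : ℚ) - n * an)) ≥ 1 := by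
  intro s _ hlow hhigh
  exact one_le_sub_mul_div_add_div hzz (by exact_mod_cast hlow) (by exact_mod_cast hhigh)

/-- The Zverovich–Zverovich condition implies the generalized bound inequality
for every admissible even sum. -/
theorem stmt_9 (a1 an n : ℕ) (hpos : 0 < an) (hord : an ≤ a1) (hcap : a1 + 1 ≤ n)
    (hzz : ((a1 : ℚ) + an + 1) ^ 2 / 4 ≤ (n : ℚ) * an) :
    ∀ s : ℕ, Even s → n * an < s → s < n * a1 →
      ((a1 : ℚ) - an) *
        (((n : ℚ) - a1 - 1) / ((n : ℚ) * a1 - s) + (an : ℚ) / ((s : ℚ) - n * an)) ≥ 1 :=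
  stmt_9_general a1 an n hzz
end

section
/- For any integer α₁ ≥ 2, every nonincreasing integer sequence with largest element α₁, smallest element 2, length n = α₁ + 1 and sum s satisfying the equality case (α₁ - 2)·((n - α₁ - 1)/(n·α₁ - s) + 2/(s - 2n)) = 1 is graphic. -/
open Finset

section Glue

variable {V : Type} [Fintype V] [DecidableEq V]

/-- Adjacency obtained by gluing a distinguished vertex `v` onto a graph `G'` on the
remaining vertices, joining `v` to the vertices satisfying `p`. -/
def glueAdj (v : V) (G' : SimpleGraph {x : V // x ≠ v}) (p : V → Prop) (x y : V) : Prop :=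
  if hx : x = v then p y
  else if hy : y = v then p x
  else G'.Adj ⟨x, hx⟩ ⟨y, hy⟩

lemma glueAdj_iff (v : V) (G' : SimpleGraph {x : V // x ≠ v}) (p : V → Prop) (x y : V) :
    glueAdj v G' p x y ↔
      ((x = v ∧ p y) ∨ (y = v ∧ x ≠ v ∧ p x) ∨
        ∃ (hx : x ≠ v) (hy : y ≠ v), G'.Adj ⟨x, hx⟩ ⟨y, hy⟩) := by
  unfold glueAdj
  by_cases hx : x = v
  · simp [hx]
  · by_cases hy : y = v
    · simp [hx, hy]
    · simp [hx, hy]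

lemma glue_graph (v : V) (G' : SimpleGraph {x : V // x ≠ v}) (hdec : DecidableRel G'.Adj)
    (p : V → Prop) [DecidablePred p] (hpv : ¬ p v) :
    ∃ (G : SimpleGraph V) (_ : DecidableRel G.Adj),
      G.degree v = (Finset.univ.filter p).card ∧
      ∀ x (hx : x ≠ v), G.degree x = G'.degree ⟨x, hx⟩ + (if p x then 1 else 0) := by
  have hsymm : ∀ x y, glueAdj v G' p x y → glueAdj v G' p y x := by
    intro x y h
    rw [glueAdj_iff] at h ⊢
    rcases h with ⟨hx, hpy⟩ | ⟨hy, hx, hpx⟩ | ⟨hx, hy, hadj⟩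
    · by_cases hy : y = v
      · exact Or.inl ⟨hy, by rwa [hx, ← hy]⟩
      · exact Or.inr (Or.inl ⟨hx, hy, hpy⟩)
    · exact Or.inl ⟨hy, hpx⟩
    · exact Or.inr (Or.inr ⟨hy, hx, G'.adj_symm hadj⟩)
  have hirr : ∀ x, ¬ glueAdj v G' p x x := by
    intro x h
    rw [glueAdj_iff] at h
    rcases h with ⟨hx, hpx⟩ | ⟨hx, hx', _⟩ | ⟨hx, _, hadj⟩
    · exact hpv (hx ▸ hpx)
    · exact hx' hx
    · exact G'.irrefl hadj
  letI instDec : DecidableRel (glueAdj v G' p) := fun x y => by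
    unfold glueAdj; infer_instance
  refine ⟨⟨glueAdj v G' p, ⟨fun x y h => hsymm x y h⟩, ⟨fun x h => hirr x h⟩⟩,
    instDec, ?_, ?_⟩
  · rw [SimpleGraph.degree, SimpleGraph.neighborFinset_eq_filter]
    congr 1
    ext y
    simp only [mem_filter, mem_univ, true_and]
    show glueAdj v G' p v y ↔ p y
    rw [glueAdj_iff]
    constructor
    · rintro (⟨_, hpy⟩ | ⟨_, hvv, _⟩ | ⟨hvv, _, _⟩)
      · exact hpy
      · exact absurd rfl hvv
      · exact absurd rfl hvv
    · intro hpy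
      exact Or.inl ⟨rfl, hpy⟩
  · intro x hx
    rw [SimpleGraph.degree, SimpleGraph.neighborFinset_eq_filter]
    have hset : (univ.filter fun y => glueAdj v G' p x y) =
        ((G'.neighborFinset ⟨x, hx⟩).map ⟨Subtype.val, Subtype.val_injective⟩) ∪
          (if p x then {v} else ∅) := by
      ext y
      simp only [mem_filter, mem_univ, true_and, mem_union, mem_map,
        SimpleGraph.mem_neighborFinset, Function.Embedding.coeFn_mk]
      rw [glueAdj_iff]
      constructor
      · rintro (⟨hxv, _⟩ | ⟨hyv, _, hpx⟩ | ⟨hx', hy, hadj⟩)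
        · exact absurd hxv hx
        · right; simp [hpx, hyv]
        · exact Or.inl ⟨⟨y, hy⟩, hadj, rfl⟩
      · rintro (⟨a, hadj, rfl⟩ | hmem)
        · exact Or.inr (Or.inr ⟨hx, a.2, hadj⟩)
        · by_cases hpx : p x
          · simp only [hpx, if_true, mem_singleton] at hmem
            exact Or.inr (Or.inl ⟨hmem, hx, hpx⟩)
          · simp [hpx] at hmem
    show (univ.filter fun y => glueAdj v G' p x y).card = _
    rw [hset, card_union_of_disjoint, card_map]
    · congr 1
      by_cases hpx : p x <;> simp [hpx]
    · rw [Finset.disjoint_right]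
      intro y hy hmem
      by_cases hpx : p x <;> simp [hpx] at hy
      subst hy
      simp only [mem_map, Function.Embedding.coeFn_mk] at hmem
      obtain ⟨a, _, ha⟩ := hmem
      exact a.2 ha

end Glue

/-- Every positive integer sequence with sum `2 * (card - 1)` is realizable (by a tree). -/
lemma tree_graphic : ∀ (m : ℕ) (V : Type) [Fintype V] [DecidableEq V],
    Fintype.card V = m → ∀ d : V → ℕ, (∀ x, 1 ≤ d x) → (∑ x, d x) = 2 * (m - 1) →
    ∃ (G : SimpleGraph V) (_ : DecidableRel G.Adj), ∀ x, G.degree x = d x := by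
  intro m
  induction m using Nat.strong_induction_on with
  | _ m IH =>
    intro V _ _ hcard d hd hsum
    have herase : ∀ x : V, ∑ y ∈ univ.erase x, d y + d x = ∑ y, d y := fun x =>
      Finset.sum_erase_add _ _ (mem_univ x)
    have hcardlb : ∀ x : V, (m - 1) ≤ ∑ y ∈ univ.erase x, d y := by
      intro x
      have h := Finset.card_nsmul_le_sum (univ.erase x) d 1 (fun y _ => hd y)
      rw [smul_eq_mul, mul_one, card_erase_of_mem (mem_univ x), card_univ, hcard] at h
      exact h
    match m, hcard with
    | 0, hcard =>
      have : IsEmpty V := Fintype.card_eq_zero_iff.mp hcard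
      exact ⟨⊥, inferInstance, fun x => (this.false x).elim⟩
    | 1, hcard =>
      exfalso
      obtain ⟨x⟩ := Fintype.card_pos_iff.mp (by omega : 0 < Fintype.card V)
      have : d x ≤ ∑ y, d y := Finset.single_le_sum (fun _ _ => Nat.zero_le _) (mem_univ x)
      have := hd x
      omega
    | 2, hcard =>
      refine ⟨⊤, inferInstance, fun x => ?_⟩
      have h2 := herase x
      have h3 := hcardlb x
      have h4 := hd x
      rw [SimpleGraph.complete_graph_degree, hcard]
      omega
    | (n+3), hcard =>
      have hsum2 : (∑ x : V, d x) = 2 * (n + 2) := hsum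
      -- find v with d v = 1
      have hv : ∃ v : V, d v = 1 := by
        by_contra hno
        push_neg at hno
        have hall : ∀ x ∈ univ, 2 ≤ d x := by
          intro x _
          have := hd x
          have := hno x
          omega
        have h := Finset.card_nsmul_le_sum univ d 2 hall
        rw [smul_eq_mul, card_univ, hcard] at h
        have h' : (n + 3) * 2 ≤ ∑ x : V, d x := h
        omega
      obtain ⟨v, hdv⟩ := hv
      -- find u ≠ v with 2 ≤ d u
      have hu : ∃ u ∈ univ.erase v, 2 ≤ d u := by
        by_contra hno
        push_neg at hno
        have hall : ∀ x ∈ univ.erase v, d x = 1 := by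
          intro x hx
          have := hd x
          have := hno x hx
          omega
        have h : ∑ y ∈ univ.erase v, d y = (univ.erase v).card * 1 := by
          rw [Finset.sum_congr rfl hall, Finset.sum_const, smul_eq_mul]
        have h2 := herase v
        rw [card_erase_of_mem (mem_univ v), card_univ, hcard] at h
        omega
      obtain ⟨u, huv, hdu⟩ := hu
      have huv' : u ≠ v := Finset.ne_of_mem_erase huv
      -- set up the smaller instance on the subtype
      have hcard' : Fintype.card {x : V // x ≠ v} = n + 2 := by
        rw [Fintype.card_subtype_compl, Fintype.card_subtype_eq, hcard]
        omega
      set d' : {x : V // x ≠ v} → ℕ :=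
        fun x => if (x : V) = u then d u - 1 else d (x : V) with hd'
      have hd'pos : ∀ x : {x : V // x ≠ v}, 1 ≤ d' x := by
        intro x
        by_cases hx : (x : V) = u
        · have h1 : d' x = d u - 1 := by simp [hd', hx]
          rw [h1]
          omega
        · have h1 : d' x = d (x : V) := by simp [hd', hx]
          rw [h1]
          exact hd _
      have hsum' : (∑ x : {x : V // x ≠ v}, d' x) = 2 * (n + 2 - 1) := by
        have key : (∑ x : {x : V // x ≠ v}, d' x)
            = ∑ y ∈ univ.erase v, (if y = u then d u - 1 else d y) :=
          (Finset.sum_subtype (univ.erase v) (fun y => by simp)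
            (fun y => if y = u then d u - 1 else d y)).symm
        have e2 : ∑ y ∈ (univ.erase v).erase u, (if y = u then d u - 1 else d y)
            + (if u = u then d u - 1 else d u)
            = ∑ y ∈ univ.erase v, (if y = u then d u - 1 else d y) :=
          Finset.sum_erase_add _ _ huv
        rw [if_pos rfl] at e2
        have e3 : ∑ y ∈ (univ.erase v).erase u, (if y = u then d u - 1 else d y)
            = ∑ y ∈ (univ.erase v).erase u, d y :=
          Finset.sum_congr rfl (fun y hy => if_neg (Finset.ne_of_mem_erase hy))
        have e4 : ∑ y ∈ (univ.erase v).erase u, d y + d u = ∑ y ∈ univ.erase v, d y :=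
          Finset.sum_erase_add _ _ huv
        have h2 := herase v
        rw [key]
        omega
      obtain ⟨G', hdec', hG'⟩ := IH (n+2) (by omega) {x : V // x ≠ v} hcard' d' hd'pos hsum'
      obtain ⟨G, hdec, hGv, hGx⟩ := glue_graph v G' hdec' (· = u) (fun h => huv' h.symm)
      refine ⟨G, hdec, fun x => ?_⟩
      by_cases hx : x = v
      · subst hx
        rw [hGv, Finset.filter_eq', if_pos (mem_univ u), card_singleton, hdv]
      · rw [hGx x hx, hG' ⟨x, hx⟩]
        by_cases hxu : x = u
        · subst hxu
          have h1 : d' ⟨x, hx⟩ = d x - 1 := by simp [hd']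
          rw [h1, if_pos rfl]
          omega
        · have h1 : d' ⟨x, hx⟩ = d x := by simp [hd', hxu]
          rw [h1, if_neg hxu, add_zero]


/-- Sharpness: with `αₙ = 2`, `n = α₁ + 1`, and sum giving equality in the bound,
every such nonincreasing sequence is graphic. -/
theorem stmt_10 (a1 : ℕ) (ha1 : 2 ≤ a1) (α : Fin (a1 + 1) → ℕ) (hα : Antitone α)
    (hfirst : α ⟨0, by omega⟩ = a1) (hlast : α ⟨a1, by omega⟩ = 2)
    (s : ℕ) (hs : s = ∑ i, α i)
    (heq : ((a1 : ℚ) - 2) *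
      (((a1 + 1 : ℕ) - a1 - 1 : ℚ) / (((a1 + 1 : ℕ) : ℚ) * a1 - s) +
        (2 : ℚ) / ((s : ℚ) - 2 * ((a1 + 1 : ℕ) : ℚ))) = 1) :
    IsGraphic α := by
  -- Step 1: extract `a1 ≥ 3` and `s + 2 = 4 * a1` from the rational equation.
  have h0 : (((a1 + 1 : ℕ) : ℚ) - a1 - 1) = 0 := by push_cast; ring
  rw [h0, zero_div, zero_add] at heq
  have ha3 : 3 ≤ a1 := by
    rcases Nat.lt_or_ge a1 3 with h | h
    · exfalso
      have ha2 : a1 = 2 := by omega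
      subst ha2
      norm_num at heq
    · exact h
  have hA : ((a1 : ℚ) - 2) ≠ 0 := by
    have : (3 : ℚ) ≤ (a1 : ℚ) := by exact_mod_cast ha3
    intro h
    rw [sub_eq_zero] at h
    rw [h] at this
    norm_num at this
  have hden : ((s : ℚ) - 2 * ((a1 + 1 : ℕ) : ℚ)) ≠ 0 := by
    intro h
    rw [h, div_zero, mul_zero] at heq
    exact one_ne_zero heq.symm
  have hsq : (s : ℚ) + 2 = 4 * (a1 : ℚ) := by
    rw [mul_div_assoc', div_eq_one_iff_eq hden] at heq
    push_cast at heq ⊢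
    linarith
  have hsn : s + 2 = 4 * a1 := by exact_mod_cast hsq
  -- Step 2: basic facts about α.
  have hall2 : ∀ x : Fin (a1 + 1), 2 ≤ α x := by
    intro x
    have hx : x ≤ ⟨a1, by omega⟩ := by
      rw [Fin.le_def]
      exact Nat.lt_succ_iff.mp x.2
    have := hα hx
    omega
  have hα0 : α 0 = a1 := hfirst
  -- Step 3: build the tree on the nonzero vertices.
  have hcard' : Fintype.card {x : Fin (a1 + 1) // x ≠ 0} = a1 := by
    rw [Fintype.card_subtype_compl, Fintype.card_subtype_eq, Fintype.card_fin]
    omega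
  have hd'pos : ∀ x : {x : Fin (a1 + 1) // x ≠ 0}, 1 ≤ α (x : Fin (a1 + 1)) - 1 := by
    intro x
    have := hall2 (x : Fin (a1 + 1))
    omega
  have hsum' : (∑ x : {x : Fin (a1 + 1) // x ≠ 0}, (α (x : Fin (a1 + 1)) - 1))
      = 2 * (a1 - 1) := by
    have key : (∑ x : {x : Fin (a1 + 1) // x ≠ 0}, (α (x : Fin (a1 + 1)) - 1))
        = ∑ y ∈ Finset.univ.erase (0 : Fin (a1 + 1)), (α y - 1) :=
      (Finset.sum_subtype (Finset.univ.erase (0 : Fin (a1 + 1))) (fun y => by simp)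
        (fun y => α y - 1)).symm
    have e1 : ∑ y ∈ Finset.univ.erase (0 : Fin (a1 + 1)), α y + α 0 = ∑ y, α y :=
      Finset.sum_erase_add _ _ (Finset.mem_univ (0 : Fin (a1 + 1)))
    have e2 : ∑ y ∈ Finset.univ.erase (0 : Fin (a1 + 1)), ((α y - 1) + 1) = ∑ y ∈ Finset.univ.erase (0 : Fin (a1 + 1)), α y :=
      Finset.sum_congr rfl (fun y _ => by have := hall2 y; omega)
    have e3 : ∑ y ∈ Finset.univ.erase (0 : Fin (a1 + 1)), ((α y - 1) + 1)
        = ∑ y ∈ Finset.univ.erase (0 : Fin (a1 + 1)), (α y - 1) + (Finset.univ.erase (0 : Fin (a1 + 1))).card := by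
      rw [Finset.sum_add_distrib, Finset.sum_const, smul_eq_mul, mul_one]
    have e4 : (Finset.univ.erase (0 : Fin (a1 + 1))).card = a1 := by
      rw [Finset.card_erase_of_mem (Finset.mem_univ (0 : Fin (a1 + 1))), Finset.card_univ, Fintype.card_fin]
      omega
    rw [key]
    omega
  obtain ⟨G', hdec', hG'⟩ := tree_graphic a1 {x : Fin (a1 + 1) // x ≠ 0} hcard'
    (fun x => α (x : Fin (a1 + 1)) - 1) hd'pos hsum'
  -- Step 4: glue the apex vertex 0, joined to everything.
  obtain ⟨G, hdec, hGv, hGx⟩ := glue_graph (0 : Fin (a1 + 1)) G' hdec'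
    (fun x => x ≠ 0) (fun h => h rfl)
  refine ⟨G, hdec, fun x => ?_⟩
  by_cases hx : x = 0
  · subst hx
    rw [hGv]
    have : (Finset.univ.filter fun x : Fin (a1 + 1) => x ≠ 0) = Finset.univ.erase (0 : Fin (a1 + 1)) :=
      Finset.filter_ne' _ _
    rw [this, Finset.card_erase_of_mem (Finset.mem_univ (0 : Fin (a1 + 1))), Finset.card_univ,
      Fintype.card_fin, hα0]
    omega
  · rw [hGx x hx, hG' ⟨x, hx⟩, if_pos hx]
    have h2 : α ((⟨x, hx⟩ : {x : Fin (a1 + 1) // x ≠ 0}) : Fin (a1 + 1)) = α x := rfl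
    rw [h2]
    have := hall2 x
    omega
end

section
/- For every integer m ≥ 3, the sequence (m, m, 3, 2, 2, ..., 2, 1) of length m+1 with m-3 twos is not graphic. -/
/-!
A vertex of degree `m` in a graph on `m + 1` vertices is adjacent to every other vertex. So the two
vertices of degree `m` are both neighbours of the last vertex, which therefore has degree at least
two rather than one.
-/

namespace SimpleGraph

variable {V : Type*} [Fintype V] (G : SimpleGraph V) [DecidableRel G.Adj]

lemma two_le_degree_of_isUniversal {u u' w : V} (huu' : u ≠ u') (hu : G.IsUniversal u)
    (hu' : G.IsUniversal u') (hwu : w ≠ u) (hwu' : w ≠ u') : 2 ≤ G.degree w := by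
  classical
  have hsub : ({u, u'} : Finset V) ⊆ G.neighborFinset w := by
    simpa [Finset.insert_subset_iff] using ⟨(hu hwu.symm).symm, (hu' hwu'.symm).symm⟩
  calc 2 = ({u, u'} : Finset V).card := (Finset.card_pair huu').symm
    _ ≤ G.degree w := (Finset.card_le_card hsub).trans_eq (G.card_neighborFinset_eq_degree w)

end SimpleGraph

/-- The sequence `(m, m, 3, 2, ..., 2, 1)` of length `m+1` (with `m-3` twos)
is not graphic. -/
theorem stmt_12 (m : ℕ) (hm : 3 ≤ m) :
    ¬ IsGraphic (fun i : Fin (m + 1) =>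
      if (i : ℕ) ≤ 1 then m else if (i : ℕ) = 2 then 3
      else if (i : ℕ) = m then 1 else 2) := by
  rintro ⟨G, _, hdeg⟩
  have huniv : ∀ i : Fin (m + 1), (i : ℕ) ≤ 1 → G.IsUniversal i := fun i hi =>
    (G.degree_eq_card_sub_one i).1 (by simp [hdeg, hi])
  have hlast : G.degree (Fin.last m) = 1 := by
    simpa [show ¬ m ≤ 1 by omega, show m ≠ 2 by omega] using hdeg (Fin.last m)
  have htwo := G.two_le_degree_of_isUniversal (u := ⟨0, by omega⟩) (u' := ⟨1, by omega⟩)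
    (w := Fin.last m) (by simp) (huniv _ zero_le_one) (huniv _ le_rfl)
    (Fin.ne_of_val_ne (by simp; omega)) (Fin.ne_of_val_ne (by simp; omega))
  omega
end

section
/- Every nonincreasing sequence α = (α₁, ..., αₙ) of nonnegative integers with even sum, α₁ ≤ n - 1, and α₁ - αₙ ≤ 1 is graphic. -/
open Finset

namespace SimpleGraph

variable {G : Type*} [AddCommGroup G]

theorem circulantGraph_adj_iff_of_neg_mem {S : Finset G} (hS : ∀ x ∈ S, -x ∈ S)
    (h0 : (0 : G) ∉ S) {u v : G} : (circulantGraph (S : Set G)).Adj u v ↔ v - u ∈ S := by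
  rw [circulantGraph_adj, mem_coe, mem_coe, ← neg_sub v u]
  constructor
  · rintro ⟨-, h | h⟩
    · simpa using hS _ h
    · exact h
  · intro h
    exact ⟨fun huv => h0 (by simpa [huv] using h), Or.inr h⟩

def shiftMatching (I : Finset G) (t : G) : SimpleGraph G :=
  fromRel fun u v => u ∈ I ∧ v = u + t

theorem disjoint_circulantGraph_shiftMatching {S I : Finset G} {t : G}
    (hS : ∀ x ∈ S, -x ∈ S) (ht : t ∉ S) :
    Disjoint (circulantGraph (S : Set G)) (shiftMatching I t) := by
  have shift_notMem : ∀ x : G, x - (x + t) ∉ S ∧ x + t - x ∉ S := fun x =>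
    ⟨fun h => ht (by simpa using hS _ h), fun h => ht (by simpa using h)⟩
  rw [disjoint_left]
  rintro u v ⟨-, hc⟩ ⟨-, ⟨-, rfl⟩ | ⟨-, rfl⟩⟩
  · exact hc.elim (shift_notMem u).1 (shift_notMem u).2
  · exact hc.elim (shift_notMem v).2 (shift_notMem v).1

variable [Fintype G] [DecidableEq G]

theorem degree_circulantGraph {S : Finset G} (hS : ∀ x ∈ S, -x ∈ S) (h0 : (0 : G) ∉ S)
    (u : G) : (circulantGraph (S : Set G)).degree u = #S := by
  have : (circulantGraph (S : Set G)).neighborFinset u = S.map (Equiv.addRight u).toEmbedding := by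
    ext v
    rw [mem_neighborFinset, circulantGraph_adj_iff_of_neg_mem hS h0, mem_map_equiv]
    simp [sub_eq_add_neg]
  rw [← card_neighborFinset_eq_degree, this, card_map]

instance (I : Finset G) (t : G) : DecidableRel (shiftMatching I t).Adj :=
  fun _ _ => inferInstanceAs (Decidable (_ ∧ _))

theorem degree_shiftMatching {I : Finset G} {t : G}
    (hI : Disjoint I (I.map (Equiv.addRight t).toEmbedding)) (u : G) :
    (shiftMatching I t).degree u =
      if u ∈ I ∪ I.map (Equiv.addRight t).toEmbedding then 1 else 0 := by
  have hI' : ∀ v ∈ I, v + t ∉ I := fun v hv hvt =>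
    Finset.disjoint_left.mp hI hvt (by simpa [mem_map_equiv] using hv)
  have adj : ∀ v, (shiftMatching I t).Adj u v ↔ (u ∈ I ∧ v = u + t) ∨ (v ∈ I ∧ u = v + t) := by
    intro v
    refine ⟨fun h => h.2, fun h => ⟨?_, h⟩⟩
    rintro rfl
    rcases h with ⟨hu, hut⟩ | ⟨hu, hut⟩ <;> exact hI' u hu (hut ▸ hu)
  split_ifs with hu
  · rw [degree_eq_one_iff_existsUnique_adj]
    rcases mem_union.mp hu with hu | hu
    · refine ⟨u + t, (adj _).mpr (Or.inl ⟨hu, rfl⟩), fun w hw => ?_⟩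
      rcases (adj w).mp hw with ⟨-, rfl⟩ | ⟨hwI, rfl⟩
      · rfl
      · exact absurd hu (hI' w hwI)
    · obtain ⟨v, hv, rfl⟩ := mem_map.mp hu
      refine ⟨v, (adj _).mpr (Or.inr ⟨hv, rfl⟩), fun w hw => ?_⟩
      rcases (adj w).mp hw with ⟨hvt, rfl⟩ | ⟨-, hwv⟩
      · exact absurd hvt (hI' v hv)
      · exact add_right_cancel hwv.symm
  · rw [degree_eq_zero_iff_notMem_support]
    rintro ⟨w, hw⟩
    rcases (adj w).mp hw with ⟨huI, -⟩ | ⟨hwI, rfl⟩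
    · exact hu (mem_union_left _ huI)
    · exact hu (mem_union_right _ (mem_map_of_mem _ hwI))

end SimpleGraph

open SimpleGraph

theorem Finset.exists_perm_map_eq {α : Type*} [DecidableEq α] {s t : Finset α} (h : #s = #t) :
    ∃ σ : Equiv.Perm α, s.map σ.toEmbedding = t := by
  obtain ⟨σ, hσ⟩ := (Set.powersetCard.isPretransitive (α := α) (n := #s)).exists_smul_eq
    ⟨s, rfl⟩ ⟨t, h.symm⟩
  refine ⟨σ, ?_⟩
  have := congrArg Subtype.val hσ
  simpa [map_eq_image, smul_finset_def] using this

def nearRegularSeq {n : ℕ} (k : ℕ) (A : Finset (Fin n)) : Fin n → ℕ :=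
  fun i => k + if i ∈ A then 1 else 0

theorem sum_nearRegularSeq {n : ℕ} (k : ℕ) (A : Finset (Fin n)) :
    ∑ i, nearRegularSeq k A i = n * k + #A := by
  simp [nearRegularSeq, sum_add_distrib]

namespace IsGraphic

variable {n : ℕ} {d : Fin n → ℕ}

theorem comp_perm (h : IsGraphic d) (σ : Equiv.Perm (Fin n)) : IsGraphic (d ∘ σ) := by
  obtain ⟨G, _, hG⟩ := h
  exact ⟨G.comap σ, inferInstance, fun i => by
    rw [Function.comp_apply, ← hG, ← Iso.comap_apply σ G i]
    convert ((Iso.comap σ G).degree_eq i).symm⟩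

theorem compl (h : IsGraphic d) : IsGraphic (fun i => n - 1 - d i) := by
  obtain ⟨G, _, hG⟩ := h
  exact ⟨Gᶜ, inferInstance, fun i => by rw [degree_compl, hG, Fintype.card_fin]⟩

theorem of_disjoint (G H : SimpleGraph (Fin n)) [DecidableRel G.Adj] [DecidableRel H.Adj]
    (hGH : Disjoint G H) : IsGraphic (fun i => G.degree i + H.degree i) :=
  ⟨G ⊔ H, inferInstance, fun i => by
    simp only [← card_neighborFinset_eq_degree]
    rw [← card_union_of_disjoint (disjoint_neighborFinset_of_disjoint G H i hGH)]
    congr 1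
    ext
    simp⟩

theorem nearRegularSeq_of_card_eq {k : ℕ} {A B : Finset (Fin n)}
    (h : IsGraphic (nearRegularSeq k A)) (hAB : #B = #A) : IsGraphic (nearRegularSeq k B) := by
  obtain ⟨σ, hσ⟩ := exists_perm_map_eq hAB
  convert h.comp_perm σ using 1
  ext i
  simp [nearRegularSeq, ← hσ]

end IsGraphic

def jumpsUpTo (n r : ℕ) : Finset (Fin n) := {x | 0 < x.val ∧ (x.val ≤ r ∨ n ≤ x.val + r)}

section jumps

variable {n r : ℕ}

@[simp]
theorem mem_jumpsUpTo {x : Fin n} :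
    x ∈ jumpsUpTo n r ↔ 0 < x.val ∧ (x.val ≤ r ∨ n ≤ x.val + r) := by
  simp [jumpsUpTo]

theorem neg_mem_jumpsUpTo [NeZero n] {x : Fin n} (hx : x ∈ jumpsUpTo n r) :
    -x ∈ jumpsUpTo n r := by
  rw [mem_jumpsUpTo] at hx ⊢
  rw [Fin.val_neg, if_neg (Fin.pos_iff_ne_zero.mp hx.1)]
  omega

theorem card_jumpsUpTo (h : 2 * r < n) : #(jumpsUpTo n r) = 2 * r := by
  have hval : (jumpsUpTo n r).map Fin.valEmbedding = Icc 1 r ∪ Icc (n - r) (n - 1) := by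
    ext a
    simp only [mem_map, mem_jumpsUpTo, Fin.valEmbedding_apply, mem_union, mem_Icc]
    constructor
    · rintro ⟨x, hx, rfl⟩
      omega
    · intro ha
      exact ⟨⟨a, by omega⟩, by simp only; omega, rfl⟩
  have hdisj : Disjoint (Icc 1 r) (Icc (n - r) (n - 1)) := by
    rw [Finset.disjoint_left]
    intro a
    simp only [mem_Icc]
    omega
  rw [← card_map Fin.valEmbedding, hval, card_union_of_disjoint hdisj, Nat.card_Icc, Nat.card_Icc]
  omega

end jumps

theorem Fin.disjoint_Iio_map_addRight {n : ℕ} [NeZero n] {b t : Fin n} (hbt : b ≤ t)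
    (hn : b.val + t.val ≤ n) :
    Disjoint (Iio b) ((Iio b).map (Equiv.addRight t).toEmbedding) := by
  rw [disjoint_right]
  intro x hx
  obtain ⟨y, hy, rfl⟩ := mem_map.mp hx
  simp only [mem_Iio, Fin.lt_def, not_lt, Fin.le_def] at hy hbt ⊢
  rw [Equiv.coe_toEmbedding, Equiv.coe_addRight, Fin.val_add_eq_ite]
  split_ifs <;> omega

theorem isGraphic_nearRegularSeq_of_circulant {n : ℕ} [NeZero n] {S A : Finset (Fin n)}
    {t : Fin n} {h : ℕ} (hS : ∀ x ∈ S, -x ∈ S) (h0 : 0 ∉ S) (ht : t ∉ S) (hA : #A = 2 * h)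
    (hht : h ≤ t.val) (htn : h + t.val ≤ n) : IsGraphic (nearRegularSeq #S A) := by
  set I : Finset (Fin n) := Iio ⟨h, by omega⟩
  have hI : Disjoint I (I.map (Equiv.addRight t).toEmbedding) :=
    Fin.disjoint_Iio_map_addRight (Fin.le_def.mpr hht) htn
  have hG := IsGraphic.of_disjoint _ _ (disjoint_circulantGraph_shiftMatching (I := I) hS ht)
  simp only [degree_circulantGraph hS h0, degree_shiftMatching hI] at hG
  refine IsGraphic.nearRegularSeq_of_card_eq hG ?_
  rw [card_union_of_disjoint hI, card_map, Fin.card_Iio, hA]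
  ring

section nearRegular

variable {n k : ℕ} {A : Finset (Fin n)}

theorem isGraphic_nearRegularSeq_of_even (hk : Even k) (hA : Even #A) (hAn : #A < n)
    (hkn : k < n) (hkA : A.Nonempty → k + 2 ≤ n) : IsGraphic (nearRegularSeq k A) := by
  obtain ⟨r, rfl⟩ := hk
  obtain ⟨h, hh⟩ := hA
  have : NeZero n := ⟨by omega⟩
  obtain ⟨t, ht, hht, htn⟩ : ∃ t : Fin n, t ∉ jumpsUpTo n r ∧ h ≤ t.val ∧ h + t.val ≤ n := by
    rcases A.eq_empty_or_nonempty with rfl | hne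
    · rw [card_empty] at hh
      refine ⟨0, ?_, ?_, ?_⟩ <;> simp only [mem_jumpsUpTo, Fin.val_zero] <;> omega
    · have := hkA hne
      refine ⟨⟨n / 2, by omega⟩, ?_, ?_, ?_⟩ <;> simp only [mem_jumpsUpTo] <;> omega
  have hG := isGraphic_nearRegularSeq_of_circulant (fun _ => neg_mem_jumpsUpTo)
    (by simp only [mem_jumpsUpTo, Fin.val_zero]; omega) ht
    (by omega : #A = 2 * h) hht htn
  rwa [card_jumpsUpTo (by omega), two_mul] at hG

theorem isGraphic_nearRegularSeq_of_odd_of_even (hk : Odd k) (hn : Even n) (hA : Even #A)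
    (hAn : #A < n) (hkn : k < n) (hkA : A.Nonempty → k + 2 ≤ n) :
    IsGraphic (nearRegularSeq k A) := by
  obtain ⟨r, rfl⟩ := hk
  obtain ⟨h, hh⟩ := hA
  obtain ⟨p, rfl⟩ := hn
  have : NeZero (p + p) := ⟨by omega⟩
  set c : Fin (p + p) := ⟨p, by omega⟩
  have hc : c ∉ jumpsUpTo (p + p) r := by simp only [mem_jumpsUpTo, c]; omega
  have hS : ∀ x ∈ insert c (jumpsUpTo (p + p) r), -x ∈ insert c (jumpsUpTo (p + p) r) := by
    simp only [mem_insert]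
    rintro x (rfl | hx)
    · left
      ext
      rw [Fin.val_neg, if_neg (by simp only [c, Fin.ext_iff, Fin.val_zero]; omega)]
      simp only [c, add_tsub_cancel_right]
    · exact Or.inr (neg_mem_jumpsUpTo hx)
  obtain ⟨t, ht, hht, htn⟩ : ∃ t : Fin (p + p),
      t ∉ insert c (jumpsUpTo (p + p) r) ∧ h ≤ t.val ∧ h + t.val ≤ p + p := by
    rcases A.eq_empty_or_nonempty with rfl | hne
    · rw [card_empty] at hh
      refine ⟨0, ?_, ?_, ?_⟩ <;>
        simp only [mem_insert, mem_jumpsUpTo, c, Fin.ext_iff, Fin.val_zero] <;> omega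
    · have := hkA hne
      refine ⟨⟨p - 1, by omega⟩, ?_, ?_, ?_⟩ <;>
        simp only [mem_insert, mem_jumpsUpTo, c, Fin.ext_iff] <;> omega
  have hG := isGraphic_nearRegularSeq_of_circulant hS
    (by simp only [mem_insert, mem_jumpsUpTo, c, Fin.ext_iff, Fin.val_zero]; omega) ht
    (by omega : #A = 2 * h) hht htn
  rwa [card_insert_of_notMem hc, card_jumpsUpTo (by omega)] at hG

theorem isGraphic_nearRegularSeq (heven : Even (n * k + #A)) (hAn : #A < n) (hkn : k < n)
    (hkA : A.Nonempty → k + 2 ≤ n) : IsGraphic (nearRegularSeq k A) := by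
  rcases Nat.even_or_odd k with hk | hk
  · exact isGraphic_nearRegularSeq_of_even hk
      (by simpa [Nat.even_add, hk, Nat.even_mul] using heven) hAn hkn hkA
  rcases Nat.even_or_odd n with hn | hn
  · exact isGraphic_nearRegularSeq_of_odd_of_even hk hn
      (by simpa [Nat.even_add, hn, Nat.even_mul] using heven) hAn hkn hkA
  -- `n` and `k` odd: the complementary sequence `n - 1 - d` has the even regular part `n - 2 - k`
  have hA : Odd #A := by
    rw [← Nat.not_even_iff_odd]
    exact fun hA => Nat.not_even_iff_odd.mpr (hn.mul hk) ((Nat.even_add.mp heven).mpr hA)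
  have hk2 := hkA (card_pos.mp hA.pos)
  obtain ⟨a, rfl⟩ := hn
  obtain ⟨b, hb⟩ := hk
  obtain ⟨c, hc⟩ := hA
  have hAc : #Aᶜ = 2 * a + 1 - #A := by rw [card_compl, Fintype.card_fin]
  have hG := (isGraphic_nearRegularSeq_of_even (k := 2 * a + 1 - 2 - k) (A := Aᶜ)
    ⟨a - b - 1, by omega⟩ ⟨a - c, by omega⟩ (by omega) (by omega) (fun _ => by omega)).compl
  convert hG using 1
  ext i
  by_cases hi : i ∈ A <;> simp [nearRegularSeq, hi] <;> omega

end nearRegular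

theorem isGraphic_of_forall_le_add_one {n : ℕ} (d : Fin n → ℕ) (hnear : ∀ i j, d i ≤ d j + 1)
    (heven : Even (∑ i, d i)) (hcap : ∀ i, d i < n) : IsGraphic d := by
  rcases n.eq_zero_or_pos with rfl | hn
  · exact ⟨⊥, inferInstance, fun i => i.elim0⟩
  obtain ⟨i₀, -, hi₀⟩ := exists_min_image univ d ⟨⟨0, hn⟩, mem_univ _⟩
  set A : Finset (Fin n) := {i | d i ≠ d i₀}
  have hd : d = nearRegularSeq (d i₀) A := by
    ext i
    have := hi₀ i (mem_univ _)
    have := hnear i i₀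
    simp only [nearRegularSeq, A, mem_filter, mem_univ, true_and]
    split_ifs <;> omega
  have hi₀A : i₀ ∉ A := by simp [A]
  rw [hd, sum_nearRegularSeq] at heven
  rw [hd]
  refine isGraphic_nearRegularSeq heven (by simpa using card_lt_univ_of_notMem hi₀A) (hcap i₀) ?_
  rintro ⟨i, hi⟩
  have := hcap i
  rw [hd] at this
  simp only [nearRegularSeq, hi, if_true] at this
  omega

/-- Chen's lemma: a near-regular nonincreasing sequence (max and min differ by at
most 1) with even sum and entries at most `n-1` is graphic. -/
theorem stmt_14 {n : ℕ} (hn : 0 < n) (α : Fin n → ℕ) (hα : Antitone α)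
    (heven : Even (∑ i, α i)) (hcap : α ⟨0, hn⟩ + 1 ≤ n)
    (hnear : α ⟨0, hn⟩ ≤ α ⟨n - 1, by omega⟩ + 1) :
    IsGraphic α := by
  have le_first : ∀ i, α i ≤ α ⟨0, hn⟩ := fun i => hα (Fin.le_def.mpr (Nat.zero_le _))
  have last_le : ∀ j, α ⟨n - 1, by omega⟩ ≤ α j := fun j =>
    hα (Fin.le_def.mpr (Nat.le_sub_one_of_lt j.isLt))
  refine isGraphic_of_forall_le_add_one α (fun i j => ?_) heven (fun i => ?_)
  · have := le_first i
    have := last_le j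
    omega
  · have := le_first i
    omega
end

section
/- The sequence (8, 6, 6, 6, 6, 6, 6, 6) of length 8 satisfies the inequality (α₁ - αₙ)·((n - α₁ - 1)/(n·α₁ - s) + αₙ/(s - n·αₙ)) ≥ 1 but is not graphic. -/
theorem IsGraphic.apply_lt {n : ℕ} {d : Fin n → ℕ} (hd : IsGraphic d) (i : Fin n) : d i < n := by
  obtain ⟨G, _, hdeg⟩ := hd
  simpa [hdeg] using G.degree_lt_card_verts i

/-- The sequence `(8, 6, 6, 6, 6, 6, 6, 6)` satisfies the bound inequality
(with `α₁ = 8`, `αₙ = 6`, `n = 8`, `s = 50`) but is not graphic. -/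
theorem stmt_16 :
    (((8 : ℚ) - 6) * (((8 : ℚ) - 8 - 1) / ((8 : ℚ) * 8 - 50) + (6 : ℚ) / ((50 : ℚ) - 8 * 6)) ≥ 1)
    ∧ ¬ IsGraphic (fun i : Fin 8 => if (i : ℕ) = 0 then 8 else 6) := by
  refine ⟨by norm_num, fun h => ?_⟩
  simpa using h.apply_lt 0
end
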